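/- arXiv:2511.00219 — 12 statements merged into one kernel-verified Lean document; each statement's English description precedes it below -/
import Mathlib

section
/- For every t ∈ ℝ, every β ∈ (0,∞) and every c̃ ∈ (0,∞), the limit as α → 0+ of φ_{α,β,c̃}(t) equals c̃·β·|t−1|. -/
open Filter Real

/-- The generator φ_{α,β,c̃} from Broniatowski & Stummer. -/
noncomputable def phi (α β c t : ℝ) : ℝ :=
  if t = 1 then 0
  else c * α * (Real.sqrt (1 + β ^ 2 * ((1 - t) / α) ^ 2) - 1 +
    Real.log (2 * (Real.sqrt (1 + β ^ 2 * ((1 - t) / α) ^ 2) - 1) /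
      (β ^ 2 * ((1 - t) / α) ^ 2)))

theorem stmt_0 (t β c : ℝ) (hβ : 0 < β) (hc : 0 < c) :
    Filter.Tendsto (fun α => phi α β c t) (nhdsWithin 0 (Set.Ioi 0))
      (nhds (c * β * |t - 1|)) := by
  rcases eq_or_ne t 1 with ht | ht
  · subst ht
    simp only [phi, if_true, sub_self, abs_zero, mul_zero]
    exact tendsto_const_nhds
  · set k : ℝ := β * (1 - t) with hkdef
    have h1t : (1 : ℝ) - t ≠ 0 := sub_ne_zero.mpr (Ne.symm ht)
    have hk : k ≠ 0 := mul_ne_zero hβ.ne' h1t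
    have hk2 : (0:ℝ) < k ^ 2 := by positivity
    have habs : c * β * |t - 1| = c * |k| := by
      rw [hkdef, abs_mul, abs_of_pos hβ, abs_sub_comm]
      ring
    rw [habs]
    -- Rewrite phi on the right of 0
    have heq : ∀ α ∈ Set.Ioi (0:ℝ), phi α β c t =
        c * (Real.sqrt (α ^ 2 + k ^ 2) - α) +
        c * (α * Real.log (2 * α) - α * Real.log (Real.sqrt (α ^ 2 + k ^ 2) + α)) := by
      intro α hα
      have hα0 : (0:ℝ) < α := hα
      have hsum : (0:ℝ) < α ^ 2 + k ^ 2 := by positivity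
      set S : ℝ := Real.sqrt (α ^ 2 + k ^ 2) with hSdef
      have hSsq : S ^ 2 = α ^ 2 + k ^ 2 := Real.sq_sqrt hsum.le
      have hS : α ≤ S := by
        rw [hSdef]
        calc α = Real.sqrt (α ^ 2) := (Real.sqrt_sq hα0.le).symm
        _ ≤ _ := Real.sqrt_le_sqrt (by nlinarith)
      have hSpos : 0 < S + α := by
        have : 0 ≤ S := Real.sqrt_nonneg _
        linarith
      have hb : β ^ 2 * ((1 - t) / α) ^ 2 = k ^ 2 / α ^ 2 := by
        field_simp [hkdef]; ring
      have hsqrt : Real.sqrt (1 + β ^ 2 * ((1 - t) / α) ^ 2) = S / α := by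
        have hinner : 1 + β ^ 2 * ((1 - t) / α) ^ 2 = (α ^ 2 + k ^ 2) / α ^ 2 := by
          rw [hb]; field_simp
        rw [hinner, Real.sqrt_div hsum.le, Real.sqrt_sq hα0.le]
      have harg : 2 * (S / α - 1) /
          (β ^ 2 * ((1 - t) / α) ^ 2) = 2 * α / (S + α) := by
        rw [hb]
        rw [div_eq_div_iff (by positivity) hSpos.ne']
        field_simp
        nlinarith [hSsq]
      rw [phi, if_neg ht, hsqrt, harg]
      rw [Real.log_div (by positivity) hSpos.ne']
      field_simp
    refine Tendsto.congr' (f₁ := fun α => c * (Real.sqrt (α ^ 2 + k ^ 2) - α) +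
        c * (α * Real.log (2 * α) - α * Real.log (Real.sqrt (α ^ 2 + k ^ 2) + α))) ?_ ?_
    · filter_upwards [self_mem_nhdsWithin] with α hα
      exact (heq α hα).symm
    -- limit of the first term
    have hA : Tendsto (fun α : ℝ => c * (Real.sqrt (α ^ 2 + k ^ 2) - α))
        (nhdsWithin 0 (Set.Ioi 0)) (nhds (c * |k|)) := by
      have hcont : Continuous fun α : ℝ => c * (Real.sqrt (α ^ 2 + k ^ 2) - α) := by
        fun_prop
      have := hcont.tendsto 0
      simp only [zero_pow, Real.sqrt_sq_eq_abs, sub_zero, ne_eq, OfNat.ofNat_ne_zero,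
        not_false_eq_true, zero_add] at this
      exact this.mono_left nhdsWithin_le_nhds
    -- limit of the second term
    have hB : Tendsto (fun α : ℝ =>
        c * (α * Real.log (2 * α) - α * Real.log (Real.sqrt (α ^ 2 + k ^ 2) + α)))
        (nhdsWithin 0 (Set.Ioi 0)) (nhds 0) := by
      have h2α : Tendsto (fun α : ℝ => 2 * α) (nhdsWithin 0 (Set.Ioi 0))
          (nhdsWithin 0 (Set.Ioi 0)) := by
        apply tendsto_nhdsWithin_of_tendsto_nhds_of_eventually_within
        · have : Continuous fun α : ℝ => 2 * α := by fun_prop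
          simpa using (this.tendsto 0).mono_left nhdsWithin_le_nhds
        · filter_upwards [self_mem_nhdsWithin] with a ha
          exact Set.mem_Ioi.mpr (mul_pos two_pos (Set.mem_Ioi.mp ha))
      have hxlogx : Tendsto (fun x : ℝ => Real.log x * x) (nhdsWithin 0 (Set.Ioi 0))
          (nhds 0) := by
        simpa using tendsto_log_mul_rpow_nhdsGT_zero zero_lt_one
      have h1 : Tendsto (fun α : ℝ => α * Real.log (2 * α)) (nhdsWithin 0 (Set.Ioi 0))
          (nhds 0) := by
        have := (hxlogx.comp h2α).const_mul (1/2 : ℝ)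
        simp only [mul_zero] at this
        refine Tendsto.congr (fun α => ?_) this
        simp only [Function.comp]
        ring
      have h2 : Tendsto (fun α : ℝ => α * Real.log (Real.sqrt (α ^ 2 + k ^ 2) + α))
          (nhdsWithin 0 (Set.Ioi 0)) (nhds 0) := by
        have hcont : Continuous fun α : ℝ => Real.sqrt (α ^ 2 + k ^ 2) + α := by fun_prop
        have hinner : Tendsto (fun α : ℝ => Real.sqrt (α ^ 2 + k ^ 2) + α) (nhds 0)
            (nhds |k|) := by
          have := hcont.tendsto 0
          simpa [Real.sqrt_sq_eq_abs] using this
        have hlog : Tendsto (fun α : ℝ => Real.log (Real.sqrt (α ^ 2 + k ^ 2) + α))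
            (nhds 0) (nhds (Real.log |k|)) :=
          (Real.continuousAt_log (abs_pos.mpr hk).ne').tendsto.comp hinner
        have := (continuous_id.tendsto (0:ℝ)).mul hlog
        simp only [id, zero_mul] at this
        exact (this.mono_left nhdsWithin_le_nhds : _)
      have := (h1.sub h2).const_mul c
      simpa using this
    have := hA.add hB
    simpa using this
end

section
/- For every t ∈ ℝ and all sequences (αₙ) and (βₙ) of positive reals with αₙ/βₙ → 0 as n → ∞, the limit as n → ∞ of φ_{αₙ,βₙ,1/βₙ}(t) equals |t−1|. -/
open Real Filter Set

lemma phi_eq (α β t : ℝ) (hα : 0 < α) (hβ : 0 < β) (ht : t ≠ 1) :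
    phi α β (1/β) t =
      Real.sqrt ((α/β)^2 + (t-1)^2) - α/β + (α/β) * Real.log 2
        - (α/β) * Real.log (Real.sqrt ((α/β)^2 + (t-1)^2) + α/β)
        + (α/β) * Real.log (α/β) := by
  have hr : 0 < α / β := div_pos hα hβ
  set r := α / β with hrdef
  have ht1 : t - 1 ≠ 0 := sub_ne_zero.mpr ht
  have hu2 : (0:ℝ) < (t-1)^2 := sq_pos_of_ne_zero ht1
  set Q := Real.sqrt (r^2 + (t-1)^2) with hQ
  have hQ2 : Q^2 = r^2 + (t-1)^2 := Real.sq_sqrt (by positivity)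
  have hQpos : 0 < Q := Real.sqrt_pos.mpr (by positivity)
  have hQr : 0 < Q + r := by linarith
  have hX : β ^ 2 * ((1 - t) / α) ^ 2 = (t-1)^2 / r^2 := by
    field_simp [hrdef]
    have hbr : β ^ 2 * r ^ 2 = α ^ 2 := by
      rw [hrdef, div_pow, mul_div_assoc', mul_div_cancel_left₀ _ (by positivity)]
    linear_combination (t - 1) ^ 2 * hbr
  have hS : Real.sqrt (1 + β ^ 2 * ((1 - t) / α) ^ 2) = Q / r := by
    rw [hX, hQ, show (1 + (t-1)^2 / r^2) = (r^2 + (t-1)^2) / r^2 by field_simp,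
      Real.sqrt_div (by positivity), Real.sqrt_sq hr.le]
  have harg : 2 * (Q / r - 1) / ((t-1)^2 / r^2) = 2 * r / (Q + r) := by
    have hfac : (Q - r) * (Q + r) = (t-1)^2 := by nlinarith [hQ2]
    field_simp
    nlinarith [hQ2]
  have hlog : Real.log (2 * r / (Q + r)) =
      Real.log 2 + Real.log r - Real.log (Q + r) := by
    rw [Real.log_div (by positivity) (by positivity),
      Real.log_mul (by norm_num) hr.ne']
  rw [phi, if_neg ht, hS, hX, harg, hlog,
    show (1:ℝ)/β * α = r from by rw [hrdef]; ring]
  field_simp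
  ring

lemma key_lim (u : ℝ) (hu : 0 < u) :
    Tendsto (fun r : ℝ => Real.sqrt (r^2 + u^2) - r + r * Real.log 2
        - r * Real.log (Real.sqrt (r^2 + u^2) + r) + r * Real.log r)
      (nhdsWithin 0 (Set.Ioi 0)) (nhds u) := by
  have h0 : Tendsto (fun r : ℝ => r) (nhdsWithin 0 (Set.Ioi 0)) (nhds 0) :=
    tendsto_id.mono_left nhdsWithin_le_nhds
  have hsq : Tendsto (fun r : ℝ => Real.sqrt (r^2 + u^2))
      (nhdsWithin 0 (Set.Ioi 0)) (nhds u) := by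
    have : Continuous fun r : ℝ => Real.sqrt (r^2 + u^2) := by continuity
    have h := (this.tendsto 0).mono_left (nhdsWithin_le_nhds (s := Set.Ioi 0))
    simpa [Real.sqrt_sq hu.le] using h
  have hlog2 : Tendsto (fun r : ℝ => r * Real.log 2)
      (nhdsWithin 0 (Set.Ioi 0)) (nhds 0) := by
    simpa using h0.mul_const (Real.log 2)
  have hlogQ : Tendsto (fun r : ℝ => r * Real.log (Real.sqrt (r^2 + u^2) + r))
      (nhdsWithin 0 (Set.Ioi 0)) (nhds 0) := by
    have hcont : Tendsto (fun r : ℝ => Real.log (Real.sqrt (r^2 + u^2) + r))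
        (nhdsWithin 0 (Set.Ioi 0)) (nhds (Real.log u)) := by
      have := (Real.continuousAt_log hu.ne').tendsto.comp
        (by simpa using hsq.add h0)
      exact this
    simpa using h0.mul hcont
  have hrlogr : Tendsto (fun r : ℝ => r * Real.log r)
      (nhdsWithin 0 (Set.Ioi 0)) (nhds 0) := by
    have h := tendsto_log_mul_rpow_nhdsGT_zero (r := 1) one_pos
    refine h.congr' ?_
    filter_upwards [self_mem_nhdsWithin] with x hx
    simp [Real.rpow_one, mul_comm]
  have := ((((hsq.sub h0).add hlog2).sub hlogQ).add hrlogr)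
  simpa using this

theorem stmt_1 (t : ℝ) (a b : ℕ → ℝ) (ha : ∀ n, 0 < a n) (hb : ∀ n, 0 < b n)
    (hab : Filter.Tendsto (fun n => a n / b n) Filter.atTop (nhds 0)) :
    Filter.Tendsto (fun n => phi (a n) (b n) (1 / b n) t) Filter.atTop
      (nhds |t - 1|) := by
  by_cases ht : t = 1
  · subst ht
    simp only [phi, if_pos rfl]
    simp
  · have ht1 : t - 1 ≠ 0 := sub_ne_zero.mpr ht
    have hu : 0 < |t - 1| := abs_pos.mpr ht1
    have hab' : Tendsto (fun n => a n / b n) atTop (nhdsWithin 0 (Set.Ioi 0)) := by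
      refine tendsto_nhdsWithin_of_tendsto_nhds_of_eventually_within _ hab ?_
      exact Eventually.of_forall fun n => div_pos (ha n) (hb n)
    have hkey := (key_lim |t - 1| hu).comp hab'
    have heq : ∀ n, (fun r : ℝ => Real.sqrt (r^2 + |t-1|^2) - r + r * Real.log 2
        - r * Real.log (Real.sqrt (r^2 + |t-1|^2) + r) + r * Real.log r)
        (a n / b n) = phi (a n) (b n) (1 / b n) t := by
      intro n
      rw [phi_eq (a n) (b n) t (ha n) (hb n) ht]
      simp [sq_abs]
    exact hkey.congr heq
end

section
/- For every β ∈ (0,∞), c̃ ∈ (0,∞), Q ∈ ℝ^K and P ∈ (0,∞)^K, the limit as α → 0+ of D_{φ_{α,β,c̃}}(Q,P) equals c̃·β·Σ_{k=1}^K |q_k − p_k|, i.e. c̃·β times the ℓ₁-distance ‖Q−P‖₁. -/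
/-- Generalized φ-divergence D_φ(Q,P) = Σ_k p_k · φ(q_k / p_k). -/
noncomputable def Dphi (K : ℕ) (φ : ℝ → ℝ) (Q P : Fin K → ℝ) : ℝ :=
  ∑ k, P k * φ (Q k / P k)

open Real Filter

lemma aux (β c : ℝ) (hβ : 0 < β) (hc : 0 < c) (q p : ℝ) (hp : 0 < p) :
    Tendsto (fun α => p * phi α β c (q / p)) (nhdsWithin 0 (Set.Ioi 0))
      (nhds (c * β * |q - p|)) := by
  by_cases hqp : q = p
  · subst hqp
    simp [phi, div_self hp.ne']
  · set t : ℝ := q / p with ht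
    have ht1 : t ≠ 1 := by
      intro h; exact hqp ((div_eq_one_iff_eq hp.ne').mp h)
    set s : ℝ := 1 - t with hsdef
    have hs : s ≠ 0 := sub_ne_zero.mpr (Ne.symm ht1)
    set F : ℝ → ℝ := fun α => Real.sqrt (α ^ 2 + β ^ 2 * s ^ 2) with hF
    have hFpos : ∀ α, 0 < F α := by
      intro α
      apply Real.sqrt_pos.mpr
      positivity
    have heq : ∀ᶠ α in nhdsWithin 0 (Set.Ioi 0), p * phi α β c t =
        c * p * F α - c * p * α + c * p * α * Real.log 2 + c * p * (α * Real.log α)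
          - c * p * (α * Real.log (F α + α)) := by
      filter_upwards [self_mem_nhdsWithin] with α (hα : 0 < α)
      have hv : β ^ 2 * ((1 - t) / α) ^ 2 = β ^ 2 * s ^ 2 / α ^ 2 := by
        rw [← hsdef]; field_simp
      have hvpos : 0 < β ^ 2 * s ^ 2 / α ^ 2 := by positivity
      have hA : Real.sqrt (1 + β ^ 2 * s ^ 2 / α ^ 2) = F α / α := by
        rw [show (1 : ℝ) + β ^ 2 * s ^ 2 / α ^ 2 = (α ^ 2 + β ^ 2 * s ^ 2) / α ^ 2 by
          field_simp]
        rw [Real.sqrt_div (by positivity), Real.sqrt_sq hα.le]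
      have hA1 : F α / α - 1 = (β ^ 2 * s ^ 2 / α ^ 2) / (F α / α + 1) := by
        have h2 : (F α / α - 1) * (F α / α + 1) = β ^ 2 * s ^ 2 / α ^ 2 := by
          have : (F α / α) ^ 2 = 1 + β ^ 2 * s ^ 2 / α ^ 2 := by
            rw [← hA, Real.sq_sqrt (by positivity)]
          nlinarith [this]
        field_simp at h2 ⊢
        rw [eq_div_iff (ne_of_gt (by linarith [hFpos α]))]; linarith [h2]
      have hFA1 : 0 < F α / α + 1 := by positivity
      have harg : 2 * (Real.sqrt (1 + β ^ 2 * s ^ 2 / α ^ 2) - 1) / (β ^ 2 * s ^ 2 / α ^ 2)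
          = 2 / (F α / α + 1) := by
        rw [hA, hA1]
        field_simp
      have hlog : Real.log (2 / (F α / α + 1)) =
          Real.log 2 + Real.log α - Real.log (F α + α) := by
        rw [Real.log_div (by norm_num) hFA1.ne',
          show F α / α + 1 = (F α + α) / α by field_simp,
          Real.log_div (by positivity) hα.ne']
        ring
      unfold phi
      rw [if_neg ht1, ← hsdef, hv, harg, hlog, hA]
      field_simp
      ring
    rw [show c * β * |q - p| = c * p * (β * |s|) - c * p * 0 + c * p * 0 * Real.log 2
        + c * p * 0 - c * p * 0 by
      have hps : p * |s| = |q - p| := by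
        rw [abs_sub_comm q p]
        have h1 : p * s = p - q := by rw [hsdef, ht]; field_simp
        calc p * |s| = |p * s| := by rw [abs_mul, abs_of_pos hp]
          _ = |p - q| := by rw [h1]
      rw [show c * p * (β * |s|) = c * β * (p * |s|) by ring, hps]; ring]
    have hF0 : Tendsto F (nhdsWithin 0 (Set.Ioi 0)) (nhds (β * |s|)) := by
      have : Tendsto F (nhds 0) (nhds (β * |s|)) := by
        have hc' : Continuous F := by
          apply Real.continuous_sqrt.comp; continuity
        have : F 0 = β * |s| := by
          simp only [hF]
          rw [show (0:ℝ) ^ 2 + β ^ 2 * s ^ 2 = (β * s) ^ 2 by ring, Real.sqrt_sq_eq_abs,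
            abs_mul, abs_of_pos hβ]
        simpa [this] using hc'.tendsto 0
      exact this.mono_left nhdsWithin_le_nhds
    have hid : Tendsto (fun α : ℝ => α) (nhdsWithin 0 (Set.Ioi 0)) (nhds 0) :=
      tendsto_id.mono_left nhdsWithin_le_nhds |>.congr (fun _ => rfl)
    have hxlogx : Tendsto (fun α : ℝ => α * Real.log α) (nhdsWithin 0 (Set.Ioi 0)) (nhds 0) := by
      have := Real.continuous_mul_log.tendsto 0
      simp only [Real.log_zero, mul_zero] at this
      exact this.mono_left nhdsWithin_le_nhds
    have hlogF : Tendsto (fun α => α * Real.log (F α + α)) (nhdsWithin 0 (Set.Ioi 0)) (nhds 0) := by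
      have h1 : Tendsto (fun α => Real.log (F α + α)) (nhdsWithin 0 (Set.Ioi 0))
          (nhds (Real.log (β * |s|))) := by
        have hpos : 0 < β * |s| := by positivity
        have := (Real.continuousAt_log hpos.ne').tendsto
        exact this.comp (by simpa using hF0.add hid)
      simpa using hid.mul h1
    apply Tendsto.congr' (heq.mono fun α h => h.symm)
    exact ((((((tendsto_const_nhds.mul hF0).sub ((tendsto_const_nhds.mul hid))).add
      (((tendsto_const_nhds.mul hid)).mul tendsto_const_nhds)).add
      (tendsto_const_nhds.mul hxlogx)).sub (tendsto_const_nhds.mul hlogF)))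

theorem stmt_2 (K : ℕ) (β c : ℝ) (hβ : 0 < β) (hc : 0 < c)
    (Q P : Fin K → ℝ) (hP : ∀ k, 0 < P k) :
    Filter.Tendsto (fun α => Dphi K (phi α β c) Q P) (nhdsWithin 0 (Set.Ioi 0))
      (nhds (c * β * ∑ k, |Q k - P k|)) := by
  rw [Finset.mul_sum]
  unfold Dphi
  exact tendsto_finset_sum _ fun k _ => aux β c hβ hc (Q k) (P k) (hP k)
end

section
/- For every α ∈ (0,∞), β ∈ (0,∞), c̃ ∈ (0,∞), every Q ∈ ℝ^K, and every sequence (P_m)_{m∈ℕ} in (0,∞)^K converging component-wise to the zero vector, the limit as m → ∞ of D_{φ_{α,β,c̃}}(Q,P_m) equals c̃·β·Σ_{k=1}^K |q_k| = c̃·β·‖Q‖₁. -/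
lemma xlogx : Filter.Tendsto (fun p : ℝ => p * Real.log p) (nhdsWithin 0 (Set.Ioi 0)) (nhds 0) := by
  have h := tendsto_log_mul_rpow_nhdsGT_zero (r := 1) zero_lt_one
  simpa [Real.rpow_one, mul_comm] using h

lemma key (α β c q : ℝ) (hα : 0 < α) (hβ : 0 < β) (hc : 0 < c) :
    Filter.Tendsto (fun p : ℝ => p * phi α β c (q / p)) (nhdsWithin 0 (Set.Ioi 0))
      (nhds (c * β * |q|)) := by
  have tp : Filter.Tendsto (fun p : ℝ => p) (nhdsWithin 0 (Set.Ioi 0)) (nhds 0) :=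
    (continuous_id.tendsto 0).mono_left nhdsWithin_le_nhds
  rcases eq_or_ne q 0 with rfl | hq
  · have heq : ∀ p : ℝ, p ∈ Set.Ioi (0:ℝ) → p * phi α β c (0 / p) = p * phi α β c 0 := by
      intro p _; rw [zero_div]
    rw [Filter.tendsto_congr' (Filter.eventuallyEq_of_mem self_mem_nhdsWithin heq)]
    simpa using tp.mul_const (phi α β c 0)
  · set L : ℝ := β / α * |q| with hL
    have hLpos : 0 < L := by
      have : 0 < |q| := abs_pos.mpr hq
      positivity
    set g : ℝ → ℝ := fun p => Real.sqrt (p ^ 2 + (β / α) ^ 2 * (p - q) ^ 2) with hg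
    have hgL : Filter.Tendsto g (nhdsWithin 0 (Set.Ioi 0)) (nhds L) := by
      have hcont : Continuous g := by
        apply Real.continuous_sqrt.comp; continuity
      have h0 : g 0 = L := by
        simp only [hg, hL]
        rw [show (0:ℝ)^2 + (β/α)^2*(0-q)^2 = (β/α*|q|)^2 by
          rw [mul_pow, sq_abs]; ring]
        exact Real.sqrt_sq (by positivity)
      have := hcont.tendsto 0
      rw [h0] at this
      exact this.mono_left nhdsWithin_le_nhds
    have heq : ∀ᶠ p in nhdsWithin 0 (Set.Ioi 0),
        p * phi α β c (q / p)
          = c * α * (g p - p + p * Real.log 2 - p * Real.log (g p + p) + p * Real.log p) := by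
      have hmem : Set.Ioo (0:ℝ) |q| ∈ nhdsWithin (0:ℝ) (Set.Ioi 0) := by
        rw [mem_nhdsWithin]
        exact ⟨Set.Iio |q|, isOpen_Iio, by simpa using abs_pos.mpr hq,
          fun x hx => ⟨hx.2, hx.1⟩⟩
      filter_upwards [hmem] with p hp
      have hp0 : 0 < p := hp.1
      have hpq : p ≠ q := by
        intro h
        have := hp.2
        rw [h, abs_of_pos (h ▸ hp0)] at this
        exact lt_irrefl _ this
      have ht1 : q / p ≠ 1 := by
        intro h
        field_simp at h
        exact hpq h.symm
      set u : ℝ := β ^ 2 * ((1 - q / p) / α) ^ 2 with hu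
      have hu0 : 0 < u := by
        have h1 : (1 : ℝ) - q / p ≠ 0 := sub_ne_zero.mpr (Ne.symm ht1)
        have h2 : (1 - q / p) / α ≠ 0 := div_ne_zero h1 hα.ne'
        positivity
      set r : ℝ := Real.sqrt (1 + u) with hr
      have hr2 : r ^ 2 = 1 + u := Real.sq_sqrt (by linarith)
      have hrpos : 0 ≤ r := Real.sqrt_nonneg _
      have hr1 : 1 < r := by nlinarith
      -- claim 1 : 2*(r-1)/u = 2/(r+1)
      have hclaim1 : 2 * (r - 1) / u = 2 / (r + 1) := by
        have hu' : u = (r - 1) * (r + 1) := by nlinarith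
        rw [hu']
        rw [show 2 * (r - 1) = (r - 1) * 2 by ring]
        rw [mul_div_mul_left _ _ (by linarith : r - 1 ≠ 0)]
      -- claim 2 : p * r = g p
      have hclaim2 : p * r = g p := by
        have : p ^ 2 * (1 + u) = p ^ 2 + (β / α) ^ 2 * (p - q) ^ 2 := by
          rw [hu]; field_simp
        rw [hg]
        simp only [← this]
        rw [Real.sqrt_mul (sq_nonneg p), Real.sqrt_sq hp0.le]
      -- claim 3 and 4
      have hgp : g p + p = p * (r + 1) := by rw [← hclaim2]; ring
      have hlog : Real.log (2 * (r - 1) / u)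
          = Real.log 2 - (Real.log (g p + p) - Real.log p) := by
        rw [hclaim1, Real.log_div two_ne_zero (by linarith : r + 1 ≠ 0), hgp,
          Real.log_mul hp0.ne' (by linarith : r + 1 ≠ 0)]
        ring
      rw [phi, if_neg ht1]
      rw [← hu, ← hr, hlog]
      rw [show g p = p * r from hclaim2.symm]
      ring
    rw [Filter.tendsto_congr' heq]
    have hlogt : Filter.Tendsto (fun p => p * Real.log (g p + p))
        (nhdsWithin 0 (Set.Ioi 0)) (nhds 0) := by
      have h1 : Filter.Tendsto (fun p => Real.log (g p + p)) (nhdsWithin 0 (Set.Ioi 0))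
          (nhds (Real.log L)) := by
        have := (Real.continuousAt_log hLpos.ne').tendsto.comp
          (by simpa using hgL.add tp : Filter.Tendsto (fun p => g p + p)
            (nhdsWithin 0 (Set.Ioi 0)) (nhds L))
        exact this
      simpa using tp.mul h1
    have htot := ((((hgL.sub tp).add (tp.mul_const (Real.log 2))).sub hlogt).add
      xlogx).const_mul (c * α)
    have hval : c * α * (L - 0 + 0 * Real.log 2 - 0 + 0) = c * β * |q| := by
      rw [hL]; field_simp; ring
    simpa only [hval] using htot

theorem stmt_4 (K : ℕ) (α β c : ℝ) (hα : 0 < α) (hβ : 0 < β) (hc : 0 < c)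
    (Q : Fin K → ℝ) (P : ℕ → Fin K → ℝ) (hP : ∀ m k, 0 < P m k)
    (hP0 : ∀ k, Filter.Tendsto (fun m => P m k) Filter.atTop (nhds 0)) :
    Filter.Tendsto (fun m => Dphi K (phi α β c) Q (P m)) Filter.atTop
      (nhds (c * β * ∑ k, |Q k|)) := by
  unfold Dphi
  rw [Finset.mul_sum]
  apply tendsto_finset_sum
  intro k _
  have hmem : Filter.Tendsto (fun m => P m k) Filter.atTop (nhdsWithin 0 (Set.Ioi 0)) :=
    tendsto_nhdsWithin_of_tendsto_nhds_of_eventually_within _ (hP0 k)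
      (Filter.Eventually.of_forall fun m => hP m k)
  exact (key α β c (Q k) hα hβ hc).comp hmem
end

section
/- For every Q ∈ ℝ^K, Q* ∈ ℝ^K, P ∈ (0,∞)^K, σ ∈ (0,∞)^K and all sequences (αₙ) and (βₙ) of positive reals with αₙ/βₙ → 0 as n → ∞, the limit as n → ∞ of D^{new}_{φ_{αₙ,βₙ,1/βₙ}, P, σ}(Q,Q*) equals Σ_{k=1}^K |q_k − q_k*| / σ_k. -/
open Real Filter


/-- Scaled shift divergence D^{new}_{φ,P,σ}(Q,Q*) = Σ_k p_k · φ((q_k − q*_k)/(p_k σ_k) + 1). -/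
noncomputable def Dnew (K : ℕ) (φ : ℝ → ℝ) (P σ Q Qs : Fin K → ℝ) : ℝ :=
  ∑ k, P k * φ ((Q k - Qs k) / (P k * σ k) + 1)


noncomputable def F (u r : ℝ) : ℝ :=
  Real.sqrt (r^2 + u^2) - r + r * Real.log 2 + r * Real.log r
    - r * Real.log (r + Real.sqrt (r^2 + u^2))

lemma F_lim (u : ℝ) (hu : 0 < u) :
    Tendsto (F u) (nhdsWithin 0 (Set.Ioi 0)) (nhds u) := by
  have hsq : Tendsto (fun r : ℝ => Real.sqrt (r^2 + u^2)) (nhdsWithin 0 (Set.Ioi 0)) (nhds u) := by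
    have : Tendsto (fun r : ℝ => Real.sqrt (r^2 + u^2)) (nhds 0) (nhds u) := by
      have := (Real.continuous_sqrt.comp (by continuity : Continuous fun r : ℝ => r^2 + u^2)).tendsto 0
      simpa [Function.comp_def, Real.sqrt_sq hu.le] using this
    exact this.mono_left nhdsWithin_le_nhds
  have hr : Tendsto (fun r : ℝ => r) (nhdsWithin 0 (Set.Ioi 0)) (nhds 0) :=
    tendsto_id.mono_left nhdsWithin_le_nhds
  have h2 : Tendsto (fun r : ℝ => r * Real.log 2) (nhdsWithin 0 (Set.Ioi 0)) (nhds 0) := by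
    simpa using hr.mul_const (Real.log 2)
  have h3 : Tendsto (fun r : ℝ => r * Real.log r) (nhdsWithin 0 (Set.Ioi 0)) (nhds 0) := by
    have := tendsto_log_mul_rpow_nhdsGT_zero (r := 1) zero_lt_one
    simp only [Real.rpow_one] at this
    have := this
    simpa [mul_comm] using this
  have h4 : Tendsto (fun r : ℝ => r * Real.log (r + Real.sqrt (r^2 + u^2)))
      (nhdsWithin 0 (Set.Ioi 0)) (nhds 0) := by
    have harg : Tendsto (fun r : ℝ => r + Real.sqrt (r^2 + u^2))
        (nhdsWithin 0 (Set.Ioi 0)) (nhds u) := by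
      simpa using hr.add hsq
    have hlog : Tendsto (fun r : ℝ => Real.log (r + Real.sqrt (r^2 + u^2)))
        (nhdsWithin 0 (Set.Ioi 0)) (nhds (Real.log u)) :=
      (Real.continuousAt_log hu.ne').tendsto.comp harg
    simpa using hr.mul hlog
  have := ((((hsq.sub hr).add h2).add h3).sub h4)
  simp only [sub_zero, add_zero] at this
  exact this

lemma key_s6 (u α β : ℝ) (hu : 0 < u) (hα : 0 < α) (hβ : 0 < β) :
    (1/β) * α * (Real.sqrt (1 + β ^ 2 * (u / α) ^ 2) - 1 +
      Real.log (2 * (Real.sqrt (1 + β ^ 2 * (u / α) ^ 2) - 1) /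
        (β ^ 2 * (u / α) ^ 2))) = F u (α/β) := by
  set r := α / β with hrdef
  have hr : 0 < r := div_pos hα hβ
  set S := Real.sqrt (r^2 + u^2) with hSdef
  have hS0 : 0 < S := Real.sqrt_pos.2 (by positivity)
  have hSr : r < S := by
    have : r = Real.sqrt (r^2) := (Real.sqrt_sq hr.le).symm
    rw [this, hSdef]
    exact Real.sqrt_lt_sqrt (by positivity) (by nlinarith)
  have hS2 : S^2 = r^2 + u^2 := Real.sq_sqrt (by positivity)
  have h1 : 1 + β ^ 2 * (u / α) ^ 2 = (r^2 + u^2) / r^2 := by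
    rw [hrdef]
    field_simp
  have hsqrt : Real.sqrt (1 + β ^ 2 * (u / α) ^ 2) = S / r := by
    rw [h1, Real.sqrt_div (by positivity), Real.sqrt_sq hr.le]
  have harg : 2 * (Real.sqrt (1 + β ^ 2 * (u / α) ^ 2) - 1) / (β ^ 2 * (u / α) ^ 2)
      = 2 * r / (r + S) := by
    rw [hsqrt]
    have hb : β ^ 2 * (u / α) ^ 2 = u^2 / r^2 := by
      rw [hrdef]; field_simp
    rw [hb]
    rw [div_eq_div_iff (by positivity) (by positivity)]
    have : (S - r) * (S + r) = u^2 := by nlinarith [hS2]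
    field_simp
    nlinarith [this]
  rw [harg, hsqrt]
  have hlog : Real.log (2 * r / (r + S)) = Real.log 2 + Real.log r - Real.log (r + S) := by
    rw [Real.log_div (by positivity) (by positivity), Real.log_mul (by norm_num) hr.ne']
  rw [hlog]
  have hβα : (1/β) * α = r := by rw [hrdef]; ring
  rw [hβα]
  field_simp [F]
  rw [F, ← hSdef]
  ring


theorem stmt_6 (K : ℕ) (Q Qs : Fin K → ℝ) (P σ : Fin K → ℝ)
    (hP : ∀ k, 0 < P k) (hσ : ∀ k, 0 < σ k)
    (a b : ℕ → ℝ) (ha : ∀ n, 0 < a n) (hb : ∀ n, 0 < b n)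
    (hab : Filter.Tendsto (fun n => a n / b n) Filter.atTop (nhds 0)) :
    Filter.Tendsto (fun n => Dnew K (phi (a n) (b n) (1 / b n)) P σ Q Qs)
      Filter.atTop (nhds (∑ k, |Q k - Qs k| / σ k)) := by
  unfold Dnew
  apply tendsto_finset_sum
  intro k _
  by_cases hx : Q k - Qs k = 0
  · simp only [hx, zero_div, zero_add, abs_zero]
    have : ∀ n, P k * phi (a n) (b n) (1 / b n) 1 = 0 := by
      intro n; simp [phi]
    simp only [this, zero_div]
    exact tendsto_const_nhds
  · set u := |Q k - Qs k| / (P k * σ k) with hudef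
    have hu : 0 < u := div_pos (abs_pos.2 hx) (mul_pos (hP k) (hσ k))
    have ht : ∀ n, P k * phi (a n) (b n) (1 / b n) ((Q k - Qs k) / (P k * σ k) + 1)
        = P k * F u (a n / b n) := by
      intro n
      have htne : (Q k - Qs k) / (P k * σ k) + 1 ≠ 1 := by
        intro h
        apply hx
        have h2 : (Q k - Qs k) / (P k * σ k) = 0 := by linarith
        have := (div_eq_zero_iff.1 h2)
        rcases this with h | h
        · exact h
        · exact absurd h (mul_pos (hP k) (hσ k)).ne'
      rw [phi, if_neg htne]
      have hsq : (1 - ((Q k - Qs k) / (P k * σ k) + 1)) ^ 2 = (|Q k - Qs k| / (P k * σ k)) ^ 2 := by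
        rw [div_pow, sq_abs]
        ring
      have h1t : ((1 - ((Q k - Qs k) / (P k * σ k) + 1)) / a n) ^ 2 = (u / a n) ^ 2 := by
        rw [div_pow, div_pow, hsq, hudef]
      rw [h1t, key_s6 u (a n) (b n) hu (ha n) (hb n)]
    simp only [ht]
    have hPu : P k * u = |Q k - Qs k| / σ k := by
      rw [hudef]
      field_simp [(hP k).ne', (hσ k).ne']
    rw [← hPu]
    apply Filter.Tendsto.const_mul
    apply (F_lim u hu).comp
    apply tendsto_nhdsWithin_of_tendsto_nhds_of_eventually_within _ hab
    exact Filter.Eventually.of_forall fun n => div_pos (ha n) (hb n)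
end

section
/- For every α ∈ (0,∞), β ∈ (0,∞), c̃ ∈ (0,∞), Q ∈ ℝ^K, Q* ∈ ℝ^K, σ ∈ (0,∞)^K, and every sequence (P_m)_{m∈ℕ} in (0,∞)^K converging component-wise to the zero vector, the limit as m → ∞ of D^{new}_{φ_{α,β,c̃}, P_m, σ}(Q,Q*) equals c̃·β·Σ_{k=1}^K |q_k − q_k*| / σ_k. -/
open Filter Real

lemma tendsto_mul_log_zero : Tendsto (fun p : ℝ => p * Real.log p) (nhdsWithin 0 (Set.Ioi 0)) (nhds 0) := by
  have h := tendsto_log_mul_rpow_nhdsGT_zero (r := 1) one_pos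
  simp only [Real.rpow_one] at h
  exact h.congr fun p => mul_comm _ _

lemma key_limit (c α A : ℝ) (hA : 0 < A) :
    Tendsto (fun p : ℝ => c * α * ((Real.sqrt (p ^ 2 + A ^ 2) - p) +
      p * (Real.log 2 + Real.log p + Real.log (Real.sqrt (p ^ 2 + A ^ 2) - p)
        - Real.log (A ^ 2)))) (nhdsWithin 0 (Set.Ioi 0)) (nhds (c * α * A)) := by
  have hsqrt : Tendsto (fun p : ℝ => Real.sqrt (p ^ 2 + A ^ 2) - p)
      (nhdsWithin 0 (Set.Ioi 0)) (nhds A) := by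
    have : ContinuousAt (fun p : ℝ => Real.sqrt (p ^ 2 + A ^ 2) - p) 0 := by
      fun_prop
    have h := (this.continuousWithinAt (s := Set.Ioi (0:ℝ))).tendsto
    have h0 : Real.sqrt ((0:ℝ) ^ 2 + A ^ 2) - 0 = A := by
      norm_num [Real.sqrt_sq hA.le]
    rwa [h0] at h
  have hid : Tendsto (fun p : ℝ => p) (nhdsWithin 0 (Set.Ioi 0)) (nhds 0) :=
    tendsto_id.mono_left nhdsWithin_le_nhds |>.congr (fun _ => rfl)
  have hlogpart : Tendsto (fun p : ℝ => p * (Real.log 2 + Real.log p +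
      Real.log (Real.sqrt (p ^ 2 + A ^ 2) - p) - Real.log (A ^ 2)))
      (nhdsWithin 0 (Set.Ioi 0)) (nhds 0) := by
    have h1 : Tendsto (fun p : ℝ => p * Real.log 2) (nhdsWithin 0 (Set.Ioi 0)) (nhds 0) := by
      have := hid.mul_const (Real.log 2); rwa [zero_mul] at this
    have h2 := tendsto_mul_log_zero
    have h3 : Tendsto (fun p : ℝ => p * Real.log (Real.sqrt (p ^ 2 + A ^ 2) - p))
        (nhdsWithin 0 (Set.Ioi 0)) (nhds 0) := by
      have hlog : Tendsto (fun p : ℝ => Real.log (Real.sqrt (p ^ 2 + A ^ 2) - p))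
          (nhdsWithin 0 (Set.Ioi 0)) (nhds (Real.log A)) :=
        ((Real.continuousAt_log hA.ne').tendsto).comp hsqrt
      have := hid.mul hlog; rwa [zero_mul] at this
    have h4 : Tendsto (fun p : ℝ => p * Real.log (A ^ 2)) (nhdsWithin 0 (Set.Ioi 0)) (nhds 0) := by
      have := hid.mul_const (Real.log (A ^ 2)); rwa [zero_mul] at this
    have := ((h1.add h2).add h3).sub h4
    simpa [mul_add, mul_sub, add_assoc] using this
  have := hsqrt.add hlogpart
  have := (this.const_mul (c * α))
  simpa using this

lemma term_tendsto (α β c : ℝ) (hα : 0 < α) (hβ : 0 < β) (u σk : ℝ) (hσk : 0 < σk) :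
    Tendsto (fun p : ℝ => p * phi α β c (u / (p * σk) + 1))
      (nhdsWithin 0 (Set.Ioi 0)) (nhds (c * β * (|u| / σk))) := by
  rcases eq_or_ne u 0 with hu | hu
  · have hval : c * β * (|u| / σk) = 0 := by simp [hu]
    rw [hval]
    have hfun : (fun p : ℝ => p * phi α β c (u / (p * σk) + 1)) = fun _ => (0:ℝ) := by
      funext p; simp [hu, phi]
    rw [hfun]
    exact tendsto_const_nhds
  · set A : ℝ := β * |u| / (σk * α) with hAdef
    have hA : 0 < A := by positivity
    have hlim := key_limit c α A hA
    have hval : c * α * A = c * β * (|u| / σk) := by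
      field_simp [hAdef]; rw [hAdef]; field_simp
    rw [hval] at hlim
    refine hlim.congr' ?_
    filter_upwards [eventually_mem_nhdsWithin] with p hp
    have hp0 : (0:ℝ) < p := hp
    have hne : u / (p * σk) + 1 ≠ 1 := by
      have : u / (p * σk) ≠ 0 := div_ne_zero hu (by positivity)
      intro h; apply this; linarith
    have hS : (0:ℝ) < p ^ 2 + A ^ 2 := by positivity
    have hsp : p < Real.sqrt (p ^ 2 + A ^ 2) := by
      have h1 : Real.sqrt (p ^ 2) < Real.sqrt (p ^ 2 + A ^ 2) :=
        Real.sqrt_lt_sqrt (by positivity) (by nlinarith)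
      rwa [Real.sqrt_sq hp0.le] at h1
    have harg : β ^ 2 * ((1 - (u / (p * σk) + 1)) / α) ^ 2 = A ^ 2 / p ^ 2 := by
      have h2 : A ^ 2 = β ^ 2 * u ^ 2 / (σk ^ 2 * α ^ 2) := by
        rw [hAdef, div_pow, mul_pow, sq_abs, mul_pow]
      rw [h2]
      field_simp
      ring
    have hsqrt_eq : Real.sqrt (1 + β ^ 2 * ((1 - (u / (p * σk) + 1)) / α) ^ 2)
        = Real.sqrt (p ^ 2 + A ^ 2) / p := by
      rw [harg]
      have h1 : 1 + A ^ 2 / p ^ 2 = (p ^ 2 + A ^ 2) / p ^ 2 := by field_simp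
      rw [h1, Real.sqrt_div hS.le, Real.sqrt_sq hp0.le]
    rw [phi, if_neg hne, hsqrt_eq, harg]
    have hlogarg : 2 * (Real.sqrt (p ^ 2 + A ^ 2) / p - 1) / (A ^ 2 / p ^ 2)
        = 2 * p * (Real.sqrt (p ^ 2 + A ^ 2) - p) / A ^ 2 := by
      field_simp
    rw [hlogarg]
    have hd : (0:ℝ) < Real.sqrt (p ^ 2 + A ^ 2) - p := sub_pos.mpr hsp
    have hlog : Real.log (2 * p * (Real.sqrt (p ^ 2 + A ^ 2) - p) / A ^ 2)
        = Real.log 2 + Real.log p + Real.log (Real.sqrt (p ^ 2 + A ^ 2) - p)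
          - Real.log (A ^ 2) := by
      rw [Real.log_div (by positivity) (by positivity), Real.log_mul (by positivity)
        hd.ne', Real.log_mul (by norm_num) hp0.ne']
    rw [hlog]
    have hps : p * (Real.sqrt (p ^ 2 + A ^ 2) / p - 1) = Real.sqrt (p ^ 2 + A ^ 2) - p := by
      field_simp
    have hinv : p * p⁻¹ = 1 := mul_inv_cancel₀ hp0.ne'
    linear_combination c * α * hps - 2 * c * α * Real.sqrt (p ^ 2 + A ^ 2) * hinv

theorem stmt_7 (K : ℕ) (α β c : ℝ) (hα : 0 < α) (hβ : 0 < β) (hc : 0 < c)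
    (Q Qs : Fin K → ℝ) (σ : Fin K → ℝ) (hσ : ∀ k, 0 < σ k)
    (P : ℕ → Fin K → ℝ) (hP : ∀ m k, 0 < P m k)
    (hP0 : ∀ k, Filter.Tendsto (fun m => P m k) Filter.atTop (nhds 0)) :
    Filter.Tendsto (fun m => Dnew K (phi α β c) (P m) σ Q Qs) Filter.atTop
      (nhds (c * β * ∑ k, |Q k - Qs k| / σ k)) := by
  simp only [Dnew, Finset.mul_sum]
  refine tendsto_finset_sum _ fun k _ => ?_
  have hPk : Tendsto (fun m => P m k) atTop (nhdsWithin 0 (Set.Ioi 0)) :=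
    tendsto_nhdsWithin_iff.mpr ⟨hP0 k, Eventually.of_forall fun m => hP m k⟩
  exact (term_tendsto α β c hα hβ (Q k - Qs k) (σ k) (hσ k)).comp hPk
end

section
/- For every α ∈ (0,∞), β ∈ (0,∞), c̃ ∈ (0,∞) and every q ∈ ℝ, the limit as p → 0+ of p · φ_{α,β,c̃}(q/p) equals c̃·β·|q|. -/
open Filter Real Set Topology

theorem stmt_8 (α β c : ℝ) (hα : 0 < α) (hβ : 0 < β) (hc : 0 < c) (q : ℝ) :
    Filter.Tendsto (fun p => p * phi α β c (q / p)) (nhdsWithin 0 (Set.Ioi 0))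
      (nhds (c * β * |q|)) := by
  rcases eq_or_ne q 0 with rfl | hq
  · simp only [zero_div, abs_zero, mul_zero]
    have h : Tendsto (fun p : ℝ => p * phi α β c 0) (𝓝 0) (𝓝 (0 * phi α β c 0)) :=
      (continuous_id.mul continuous_const).tendsto 0
    simpa using h.mono_left nhdsWithin_le_nhds
  · have hq0 : 0 < |q| := abs_pos.mpr hq
    have hL : 0 < β * |q| / α := by positivity
    have hid : Tendsto (fun p : ℝ => p) (𝓝[>] (0:ℝ)) (𝓝 0) :=
      tendsto_id.mono_left nhdsWithin_le_nhds
    -- the auxiliary function g p = sqrt (p² + β²(p-q)²/α²) = p * s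
    have hgL : Tendsto (fun p : ℝ => Real.sqrt (p^2 + β^2*(p-q)^2/α^2)) (𝓝[>] 0)
        (𝓝 (β * |q| / α)) := by
      have hcont : Tendsto (fun p : ℝ => Real.sqrt (p^2 + β^2*(p-q)^2/α^2)) (𝓝 0)
          (𝓝 (Real.sqrt ((0:ℝ)^2 + β^2*(0-q)^2/α^2))) :=
        (Real.continuous_sqrt.comp (by continuity)).tendsto 0
      have hval : Real.sqrt ((0:ℝ)^2 + β^2*(0-q)^2/α^2) = β * |q| / α := by
        have h1 : (0:ℝ)^2 + β^2*(0-q)^2/α^2 = (β*|q|/α)^2 := by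
          rw [div_pow, mul_pow, sq_abs]; ring
        rw [h1, Real.sqrt_sq hL.le]
      rw [hval] at hcont
      exact hcont.mono_left nhdsWithin_le_nhds
    have hplogp : Tendsto (fun p : ℝ => p * Real.log p) (𝓝[>] (0:ℝ)) (𝓝 0) := by
      refine (tendsto_log_mul_rpow_nhdsGT_zero one_pos).congr' ?_
      filter_upwards [self_mem_nhdsWithin] with p _
      rw [Real.rpow_one, mul_comm]
    have hploggp : Tendsto
        (fun p : ℝ => p * Real.log (Real.sqrt (p^2 + β^2*(p-q)^2/α^2) + p))
        (𝓝[>] (0:ℝ)) (𝓝 0) := by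
      have hsum : Tendsto (fun p : ℝ => Real.sqrt (p^2 + β^2*(p-q)^2/α^2) + p)
          (𝓝[>] 0) (𝓝 (β * |q| / α + 0)) := hgL.add hid
      have hlog : Tendsto
          (fun p : ℝ => Real.log (Real.sqrt (p^2 + β^2*(p-q)^2/α^2) + p))
          (𝓝[>] 0) (𝓝 (Real.log (β * |q| / α))) := by
        have := (Real.continuousAt_log hL.ne').tendsto
        exact this.comp (by simpa using hsum)
      simpa using hid.mul hlog
    -- the limit of the simplified expression
    have hh : Tendsto (fun p : ℝ =>
        c*α*(Real.sqrt (p^2 + β^2*(p-q)^2/α^2) - p + p*Real.log 2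
          - p*Real.log (Real.sqrt (p^2 + β^2*(p-q)^2/α^2) + p) + p*Real.log p))
        (𝓝[>] (0:ℝ)) (𝓝 (c * β * |q|)) := by
      have hconst : Tendsto (fun p : ℝ => p * Real.log 2) (𝓝[>] (0:ℝ)) (𝓝 0) := by
        simpa using hid.mul_const (Real.log 2)
      have := ((((hgL.sub hid).add hconst).sub hploggp).add hplogp).const_mul (c*α)
      have hval : c*α*(β * |q| / α - 0 + 0 - 0 + 0) = c * β * |q| := by
        field_simp; ring
      rw [hval] at this
      exact this
    refine hh.congr' ?_
    filter_upwards [Ioo_mem_nhdsGT_of_mem (Set.left_mem_Ico.mpr hq0)] with p hp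
    obtain ⟨hp0, hpq⟩ := hp
    have hpne : p ≠ 0 := hp0.ne'
    have hpq' : p ≠ q := by
      intro h
      rw [← h, abs_of_pos hp0] at hpq
      exact lt_irrefl _ hpq
    have ht : q / p ≠ 1 := by
      intro h'
      rw [div_eq_one_iff_eq hpne] at h'
      exact hpq' h'.symm
    rw [phi, if_neg ht]
    set w : ℝ := β ^ 2 * ((1 - q/p)/α) ^ 2 with hw
    set s : ℝ := Real.sqrt (1 + w) with hs
    have h1 : (1 - q/p) ≠ 0 := sub_ne_zero.mpr (Ne.symm ht)
    have h2 : ((1 - q/p)/α) ≠ 0 := div_ne_zero h1 hα.ne'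
    have hwpos : 0 < w := by
      have := (sq_nonneg ((1 - q/p)/α)).lt_of_ne (Ne.symm (pow_ne_zero 2 h2))
      rw [hw]; positivity
    have hs2 : s^2 = 1 + w := Real.sq_sqrt (by linarith)
    have hs1 : 1 < s := by
      have h3 := Real.sqrt_lt_sqrt zero_le_one (by linarith : (1:ℝ) < 1 + w)
      rwa [Real.sqrt_one] at h3
    have hkey : 2*(s-1)/w = 2/(s+1) := by
      rw [div_eq_div_iff hwpos.ne' (by linarith : (0:ℝ) < s+1).ne']
      linear_combination 2 * hs2
    have hpg : p * s = Real.sqrt (p^2 + β^2*(p-q)^2/α^2) := by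
      have harg : p^2 + β^2*(p-q)^2/α^2 = p^2 * (1 + w) := by
        rw [hw]; field_simp
      rw [harg, Real.sqrt_mul (sq_nonneg p), Real.sqrt_sq hp0.le, hs]
    have hgp : 0 < Real.sqrt (p^2 + β^2*(p-q)^2/α^2) + p := by
      have := Real.sqrt_nonneg (p^2 + β^2*(p-q)^2/α^2)
      linarith
    have hsplit : Real.log (s+1) =
        Real.log (Real.sqrt (p^2 + β^2*(p-q)^2/α^2) + p) - Real.log p := by
      have h4 : s + 1 = (Real.sqrt (p^2 + β^2*(p-q)^2/α^2) + p)/p := by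
        rw [← hpg]; field_simp
      rw [h4, Real.log_div hgp.ne' hpne]
    rw [hkey, Real.log_div two_ne_zero (by linarith : (0:ℝ) < s+1).ne', hsplit, ← hpg]
    ring
end

section
/- For every α ∈ (0,∞), β ∈ (0,∞), c̃ ∈ (0,∞) and every q ∈ ℝ, the limit as p → 0+ of p · φ_{α,β,c̃}(q/p + 1) equals c̃·β·|q|. -/
lemma phi_key (α β c q : ℝ) (hα : 0 < α) (hβ : 0 < β) (hq : q ≠ 0)
    {p : ℝ} (hp0 : 0 < p) :
    c * (Real.sqrt (α^2*p^2 + β^2*q^2) - p*α)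
      + c*α*(p * Real.log p + p * Real.log (2*α)
          - p * Real.log (Real.sqrt (α^2*p^2+β^2*q^2) + p*α))
    = p * phi α β c (q / p + 1) := by
  have hpα : 0 < p * α := mul_pos hp0 hα
  obtain ⟨S, hSdef⟩ : ∃ S, Real.sqrt (α^2*p^2+β^2*q^2) = S := ⟨_, rfl⟩
  have hS2 : S^2 = α^2*p^2+β^2*q^2 := by rw [← hSdef]; exact Real.sq_sqrt (by positivity)
  have hSgt : p*α < S := by
    rw [← hSdef]
    have hbq : 0 < β^2*q^2 := by positivity
    exact (Real.lt_sqrt hpα.le).mpr (by nlinarith)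
  rw [hSdef]
  have hSpos : 0 < S := lt_trans hpα hSgt
  have ht : q/p + 1 ≠ 1 := by
    intro h
    have hqp : q / p = 0 := by linarith
    rcases div_eq_zero_iff.mp hqp with h' | h'
    · exact hq h'
    · exact hp0.ne' h'
  rw [phi, if_neg ht]
  have hX : β^2 * ((1 - (q/p+1))/α)^2 = β^2*q^2/(p^2*α^2) := by
    field_simp
    ring
  have hsqrtE : Real.sqrt (1 + β^2*((1-(q/p+1))/α)^2) = S/(p*α) := by
    rw [hX, show (1:ℝ) + β^2*q^2/(p^2*α^2) = (S/(p*α))^2 by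
      rw [div_pow, hS2]; field_simp]
    exact Real.sqrt_sq (div_nonneg hSpos.le hpα.le)
  have hfac : β^2*q^2 = (S - p*α)*(S + p*α) := by linear_combination -hS2
  have harg : 2*(S/(p*α) - 1)/(β^2*q^2/(p^2*α^2)) = 2*p*α/(S+p*α) := by
    rw [hfac]
    have h1 : S - p*α ≠ 0 := sub_ne_zero.mpr hSgt.ne'
    have h2 : S + p*α ≠ 0 := by positivity
    field_simp
  have hlog : Real.log (2*p*α/(S+p*α))
      = Real.log p + Real.log (2*α) - Real.log (S+p*α) := by
    rw [Real.log_div (by positivity) (by positivity),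
      show (2:ℝ)*p*α = p*(2*α) by ring, Real.log_mul hp0.ne' (by positivity)]
  rw [hsqrtE, hX, harg, hlog]
  field_simp

theorem stmt_9 (α β c : ℝ) (hα : 0 < α) (hβ : 0 < β) (hc : 0 < c) (q : ℝ) :
    Filter.Tendsto (fun p => p * phi α β c (q / p + 1)) (nhdsWithin 0 (Set.Ioi 0))
      (nhds (c * β * |q|)) := by
  rcases eq_or_ne q 0 with hq | hq
  · subst hq
    have h : (fun p : ℝ => p * phi α β c (0 / p + 1)) = fun _ => (0:ℝ) := by
      funext p; simp [phi]
    rw [h]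
    simpa using (tendsto_const_nhds : Filter.Tendsto (fun _ : ℝ => (0:ℝ)) _ (nhds 0))
  · set K := β * |q| with hK
    have hKpos : 0 < K := mul_pos hβ (abs_pos.mpr hq)
    have hsqrt0 : Real.sqrt (α^2*0^2 + β^2*q^2) = K := by
      rw [show α^2*0^2 + β^2*q^2 = (β*q)^2 by ring, Real.sqrt_sq_eq_abs, abs_mul,
        abs_of_pos hβ]
    -- limit of the explicit function g
    have hA : Filter.Tendsto (fun p : ℝ => Real.sqrt (α^2*p^2 + β^2*q^2))
        (nhdsWithin 0 (Set.Ioi 0)) (nhds K) := by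
      have hcont : Continuous fun p : ℝ => Real.sqrt (α^2*p^2 + β^2*q^2) := by
        continuity
      have := hcont.tendsto 0
      rw [hsqrt0] at this
      exact this.mono_left nhdsWithin_le_nhds
    have hB : Filter.Tendsto (fun p : ℝ => p * α) (nhdsWithin 0 (Set.Ioi 0)) (nhds 0) := by
      have : Filter.Tendsto (fun p : ℝ => p * α) (nhds 0) (nhds (0 * α)) :=
        (continuous_id.mul continuous_const).tendsto 0
      rw [zero_mul] at this
      exact this.mono_left nhdsWithin_le_nhds
    have hC : Filter.Tendsto (fun p : ℝ => p * Real.log p)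
        (nhdsWithin 0 (Set.Ioi 0)) (nhds 0) := by
      have h := tendsto_log_mul_rpow_nhdsGT_zero (one_pos)
      refine h.congr' ?_
      filter_upwards [self_mem_nhdsWithin] with p hp
      rw [Real.rpow_one, mul_comm]
    have hD : Filter.Tendsto (fun p : ℝ => p * Real.log (2*α))
        (nhdsWithin 0 (Set.Ioi 0)) (nhds 0) := by
      have : Filter.Tendsto (fun p : ℝ => p * Real.log (2*α)) (nhds 0)
          (nhds (0 * Real.log (2*α))) := (continuous_id.mul continuous_const).tendsto 0
      rw [zero_mul] at this
      exact this.mono_left nhdsWithin_le_nhds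
    have hE : Filter.Tendsto (fun p : ℝ => p * Real.log (Real.sqrt (α^2*p^2+β^2*q^2) + p*α))
        (nhdsWithin 0 (Set.Ioi 0)) (nhds 0) := by
      have hid : Filter.Tendsto (fun p : ℝ => p) (nhdsWithin 0 (Set.Ioi 0)) (nhds 0) :=
        Filter.tendsto_id.mono_left nhdsWithin_le_nhds
      have hlog : Filter.Tendsto (fun p : ℝ => Real.log (Real.sqrt (α^2*p^2+β^2*q^2) + p*α))
          (nhdsWithin 0 (Set.Ioi 0)) (nhds (Real.log K)) := by
        have hca : ContinuousAt (fun p : ℝ => Real.log (Real.sqrt (α^2*p^2+β^2*q^2) + p*α))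
            0 := by
          have hc1 : Continuous fun p : ℝ => Real.sqrt (α^2*p^2+β^2*q^2) + p*α := by
            continuity
          apply ContinuousAt.log hc1.continuousAt
          rw [show Real.sqrt (α^2*0^2+β^2*q^2) + 0*α = K by rw [hsqrt0]; ring]
          exact hKpos.ne'
        have := hca.tendsto
        rw [show Real.sqrt (α^2*0^2+β^2*q^2) + 0*α = K by rw [hsqrt0]; ring] at this
        exact this.mono_left nhdsWithin_le_nhds
      have := hid.mul hlog
      rw [zero_mul] at this
      exact this
    have hg : Filter.Tendsto (fun p : ℝ =>
        c * (Real.sqrt (α^2*p^2 + β^2*q^2) - p*α)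
        + c*α*(p * Real.log p + p * Real.log (2*α)
            - p * Real.log (Real.sqrt (α^2*p^2+β^2*q^2) + p*α)))
        (nhdsWithin 0 (Set.Ioi 0)) (nhds (c * β * |q|)) := by
      have := (((hA.sub hB).const_mul c).add (((hC.add hD).sub hE).const_mul (c*α)))
      have hval : c * (K - 0) + c*α*(0 + 0 - 0) = c * β * |q| := by rw [hK]; ring
      rw [hval] at this
      exact this
    refine hg.congr' ?_
    filter_upwards [self_mem_nhdsWithin] with p hp
    exact phi_key α β c q hα hβ hq hp
end

section
/- For every α ∈ (0,∞), β ∈ (0,∞) and c̃ ∈ (0,∞), the limit as x → +∞ of φ_{α,β,c̃}(x)/x equals c̃·β, and the limit as x → +∞ of φ_{α,β,c̃}(−x)/x also equals c̃·β; equivalently, φ_{α,β,c̃}(t)/|t| → c̃·β as |t| → ∞. -/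
open Filter Real Topology

private lemma one_div_sq_tendsto : Tendsto (fun x : ℝ => 1 / x ^ 2) atTop (nhds 0) := by
  have h : Tendsto (fun x : ℝ => x ^ 2) atTop atTop := tendsto_pow_atTop two_ne_zero
  simpa [one_div, Pi.inv_def] using h.inv_tendsto_atTop

private lemma one_div_tendsto : Tendsto (fun x : ℝ => 1 / x) atTop (nhds 0) := by
  simpa [one_div] using tendsto_inv_atTop_zero

private lemma phi_main (α β c : ℝ) (hα : 0 < α) (hβ : 0 < β) (hc : 0 < c) (t : ℝ → ℝ)
    (h1 : ∀ᶠ x in atTop, t x ≠ 1)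
    (h2 : Tendsto (fun x => ((1 - t x) / α) ^ 2 / x ^ 2) atTop (nhds (1 / α ^ 2))) :
    Tendsto (fun x => phi α β c (t x) / x) atTop (nhds (c * β)) := by
  set s : ℝ → ℝ := fun x => Real.sqrt (1 + β ^ 2 * ((1 - t x) / α) ^ 2) with hs
  have hpos : ∀ x, (0:ℝ) ≤ 1 + β ^ 2 * ((1 - t x) / α) ^ 2 := fun x => by positivity
  -- Claim A : s x / x → β / α
  have hA : Tendsto (fun x => s x / x) atTop (nhds (β / α)) := by
    have hinner : Tendsto (fun x => 1 / x ^ 2 + β ^ 2 * (((1 - t x) / α) ^ 2 / x ^ 2))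
        atTop (nhds ((β / α) ^ 2)) := by
      have := one_div_sq_tendsto.add (h2.const_mul (β ^ 2))
      convert this using 2
      field_simp
      ring
    have hsq := (Real.continuous_sqrt.tendsto _).comp hinner
    rw [Real.sqrt_sq (by positivity)] at hsq
    apply hsq.congr'
    filter_upwards [eventually_gt_atTop (0:ℝ)] with x hx
    have hx2 : (0:ℝ) < x ^ 2 := by positivity
    show Real.sqrt (1 / x ^ 2 + β ^ 2 * (((1 - t x) / α) ^ 2 / x ^ 2)) = s x / x
    rw [show 1 / x ^ 2 + β ^ 2 * (((1 - t x) / α) ^ 2 / x ^ 2)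
        = (1 + β ^ 2 * ((1 - t x) / α) ^ 2) / x ^ 2 by ring,
      Real.sqrt_div (hpos x), Real.sqrt_sq hx.le]
  -- Claim B : s → atTop
  have hB : Tendsto s atTop atTop := by
    have h := (hA.pos_mul_atTop (by positivity) tendsto_id)
    apply h.congr'
    filter_upwards [eventually_gt_atTop (0:ℝ)] with x hx
    field_simp
    rfl
  -- Claim C : log (s + 1) / x → 0
  have hs1 : Tendsto (fun x => s x + 1) atTop atTop := hB.atTop_add tendsto_const_nhds
  have hlog : Tendsto (fun y : ℝ => Real.log y / y) atTop (nhds 0) :=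
    Real.isLittleO_log_id_atTop.tendsto_div_nhds_zero
  have hs1x : Tendsto (fun x => (s x + 1) / x) atTop (nhds (β / α)) := by
    have := hA.add one_div_tendsto
    simpa [add_div] using this
  have hC : Tendsto (fun x => Real.log (s x + 1) / x) atTop (nhds 0) := by
    have h := (hlog.comp hs1).mul hs1x
    rw [zero_mul] at h
    apply h.congr'
    filter_upwards [hs1.eventually (eventually_gt_atTop (0:ℝ))] with x hx
    show Real.log (s x + 1) / (s x + 1) * ((s x + 1) / x) = Real.log (s x + 1) / x
    field_simp
  -- Rewrite phi eventually
  have hD : ∀ᶠ x in atTop, phi α β c (t x) / x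
      = c * α * (s x / x) + c * α * (Real.log 2 - 1) * (1 / x)
        - c * α * (Real.log (s x + 1) / x) := by
    filter_upwards [h1] with x hx
    have hu : (0:ℝ) < ((1 - t x) / α) ^ 2 := by
      have : (1 - t x) / α ≠ 0 := div_ne_zero (by intro h; apply hx; linarith [sub_eq_zero.mp h]) hα.ne'
      positivity
    have hsgt : (1:ℝ) < s x := by
      rw [hs]
      have hbu := mul_pos (pow_pos hβ 2) hu
      have : (1:ℝ) < 1 + β ^ 2 * ((1 - t x) / α) ^ 2 := by linarith
      calc (1:ℝ) = Real.sqrt 1 := (Real.sqrt_one).symm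
        _ < _ := Real.sqrt_lt_sqrt zero_le_one this
    have hsq : s x ^ 2 = 1 + β ^ 2 * ((1 - t x) / α) ^ 2 := Real.sq_sqrt (hpos x)
    have key : 2 * (s x - 1) / (β ^ 2 * ((1 - t x) / α) ^ 2) = 2 / (s x + 1) := by
      have hb : β ^ 2 * ((1 - t x) / α) ^ 2 = (s x - 1) * (s x + 1) := by nlinarith
      rw [hb, mul_comm 2 (s x - 1), mul_div_mul_left _ _ (by linarith : s x - 1 ≠ 0)]
    have hphi : phi α β c (t x) = c * α * (s x - 1 + (Real.log 2 - Real.log (s x + 1))) := by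
      rw [phi, if_neg hx, key, Real.log_div two_ne_zero (by linarith)]
    rw [hphi]; ring
  have hfinal := ((hA.const_mul (c * α)).add (one_div_tendsto.const_mul (c * α * (Real.log 2 - 1)))).sub
      (hC.const_mul (c * α))
  have : c * α * (β / α) + c * α * (Real.log 2 - 1) * 0 - c * α * 0 = c * β := by
    field_simp; ring
  rw [this] at hfinal
  exact hfinal.congr' (hD.mono fun x hx => hx.symm)
  
theorem stmt_10 (α β c : ℝ) (hα : 0 < α) (hβ : 0 < β) (hc : 0 < c) :
    Filter.Tendsto (fun x => phi α β c x / x) Filter.atTop (nhds (c * β)) ∧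
    Filter.Tendsto (fun x => phi α β c (-x) / x) Filter.atTop (nhds (c * β)) := by
  constructor
  · apply phi_main α β c hα hβ hc _ (eventually_ne_atTop 1)
    have h : Tendsto (fun x : ℝ => ((1 / x - 1) / α) ^ 2) atTop (nhds (((0 - 1) / α) ^ 2)) :=
      ((one_div_tendsto.sub tendsto_const_nhds).div_const α).pow 2
    rw [show ((0 - 1) / α) ^ 2 = 1 / α ^ 2 by rw [div_pow]; norm_num] at h
    apply h.congr'
    filter_upwards [eventually_gt_atTop (0:ℝ)] with x hx
    rw [show (1 / x - 1) / α = (1 - x) / (α * x) by field_simp,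
      div_pow, div_pow, mul_pow, div_div]
  · apply phi_main α β c hα hβ hc _ ?_
    · have h : Tendsto (fun x : ℝ => ((1 / x + 1) / α) ^ 2) atTop (nhds (((0 + 1) / α) ^ 2)) :=
        ((one_div_tendsto.add tendsto_const_nhds).div_const α).pow 2
      rw [show ((0 + 1) / α) ^ 2 = 1 / α ^ 2 by rw [div_pow]; norm_num] at h
      apply h.congr'
      filter_upwards [eventually_gt_atTop (0:ℝ)] with x hx
      rw [show (1 - -x) = 1 + x by ring,
        show (1 / x + 1) / α = (1 + x) / (α * x) by field_simp,
        div_pow, div_pow, mul_pow, div_div]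
    · filter_upwards [eventually_gt_atTop (0:ℝ)] with x hx
      intro h; rw [show x = -1 by linarith] at hx; linarith
end

section
/- For every α ∈ (0,∞), β ∈ (0,∞) and c̃ ∈ (0,∞), the function φ_{α,β,c̃} is infinitely differentiable (of class C^∞) on all of ℝ, including at the point t = 1. -/
theorem stmt_12 (α β c : ℝ) (hα : 0 < α) (hβ : 0 < β) (hc : 0 < c) :
    ContDiff ℝ (⊤ : ℕ∞) (phi α β c) := by
  have key : phi α β c = fun t =>
      c * α * (Real.sqrt (1 + β ^ 2 * ((1 - t) / α) ^ 2) - 1 +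
        (Real.log 2 - Real.log (1 + Real.sqrt (1 + β ^ 2 * ((1 - t) / α) ^ 2)))) := by
    funext t
    by_cases ht : t = 1
    · subst ht
      simp [phi]
      norm_num
    · have h1t : (1 : ℝ) - t ≠ 0 := sub_ne_zero.mpr (Ne.symm ht)
      set u : ℝ := β ^ 2 * ((1 - t) / α) ^ 2 with hu
      have hupos : 0 < u :=
        mul_pos (pow_pos hβ 2) (pow_two_pos_of_ne_zero (div_ne_zero h1t hα.ne'))
      set s : ℝ := Real.sqrt (1 + u) with hs
      have hs1 : 1 < s := by
        rw [hs]
        nlinarith [Real.sq_sqrt (show (0:ℝ) ≤ 1 + u by linarith),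
          Real.sqrt_nonneg (1 + u)]
      have hsq : s ^ 2 = 1 + u := Real.sq_sqrt (by linarith)
      have hfac : (s - 1) * (1 + s) = u := by nlinarith
      have hratio : 2 * (s - 1) / u = 2 / (1 + s) := by
        have h1 : s - 1 ≠ 0 := sub_ne_zero.mpr hs1.ne'
        have h2 : 1 + s ≠ 0 := by positivity
        rw [← hfac]
        field_simp
      simp only [phi, if_neg ht]
      rw [hratio, Real.log_div (by norm_num) (by positivity)]
  rw [key]
  rw [contDiff_iff_contDiffAt]
  intro x
  have hf : ContDiff ℝ (⊤ : ℕ∞) (fun t : ℝ => 1 + β ^ 2 * ((1 - t) / α) ^ 2) := by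
    apply contDiff_const.add
    apply contDiff_const.mul
    exact (((contDiff_const.sub contDiff_id).div_const α).pow 2)
  have hfpos : ∀ t : ℝ, 0 < 1 + β ^ 2 * ((1 - t) / α) ^ 2 := fun t => by positivity
  have hsqrt : ContDiffAt ℝ (⊤ : ℕ∞) (fun t : ℝ => Real.sqrt (1 + β ^ 2 * ((1 - t) / α) ^ 2)) x :=
    (Real.contDiffAt_sqrt (hfpos x).ne').comp x hf.contDiffAt
  have hpos : (0:ℝ) < 1 + Real.sqrt (1 + β ^ 2 * ((1 - x) / α) ^ 2) := by
    have := Real.sqrt_nonneg (1 + β ^ 2 * ((1 - x) / α) ^ 2); linarith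
  have hlog : ContDiffAt ℝ (⊤ : ℕ∞)
      (fun t : ℝ => Real.log (1 + Real.sqrt (1 + β ^ 2 * ((1 - t) / α) ^ 2))) x :=
    by have := ((Real.contDiffAt_log (n := (⊤ : ℕ∞))).2 hpos.ne').comp x (contDiffAt_const.add hsqrt); exact this
  exact contDiffAt_const.mul ((hsqrt.sub contDiffAt_const).add (contDiffAt_const.sub hlog))
end

section
/- For every α ∈ (0,∞), β ∈ (0,∞), c̃ ∈ (0,∞) and every t ∈ ℝ, one has φ_{α,β,c̃}(t) ≤ c̃·β·|t−1|, with equality if and only if t = 1. -/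
theorem stmt_13 (α β c : ℝ) (hα : 0 < α) (hβ : 0 < β) (hc : 0 < c) (t : ℝ) :
    phi α β c t ≤ c * β * |t - 1| ∧ (phi α β c t = c * β * |t - 1| ↔ t = 1) := by
  rcases eq_or_ne t 1 with h | h
  · subst h; simp [phi]
  · have key : phi α β c t < c * β * |t - 1| := by
      unfold phi
      rw [if_neg h]
      set x : ℝ := (1 - t) / α with hxdef
      have hx : x ≠ 0 := by
        apply div_ne_zero _ hα.ne'
        intro hh
        exact h (by linarith)
      have hx2 : 0 < β ^ 2 * x ^ 2 := by positivity
      set s : ℝ := Real.sqrt (1 + β ^ 2 * x ^ 2) with hs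
      have hs2 : s ^ 2 = 1 + β ^ 2 * x ^ 2 := Real.sq_sqrt (by positivity)
      have hsnn : 0 ≤ s := Real.sqrt_nonneg _
      have hs1 : 1 < s := by nlinarith
      have hfac : β ^ 2 * x ^ 2 = (s - 1) * (s + 1) := by nlinarith
      have hlogarg : 2 * (s - 1) / (β ^ 2 * x ^ 2) = 2 / (s + 1) := by
        rw [hfac, mul_comm 2 (s - 1),
          mul_div_mul_left _ _ (by linarith : s - 1 ≠ 0)]
      have hlogneg : Real.log (2 * (s - 1) / (β ^ 2 * x ^ 2)) < 0 := by
        rw [hlogarg]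
        apply Real.log_neg (by positivity)
        rw [div_lt_one (by linarith)]
        linarith
      have habs : 0 < |x| := abs_pos.mpr hx
      have hbx : 0 < β * |x| := mul_pos hβ habs
      have hsx : s < 1 + β * |x| := by
        nlinarith [sq_abs x]
      have haxt : α * |x| = |t - 1| := by
        rw [hxdef, abs_div, abs_of_pos hα, mul_div_cancel₀ _ hα.ne',
          abs_sub_comm]
      have hcα := mul_pos hc hα
      have h2 : c * α * β * |x| = c * β * |t - 1| := by rw [← haxt]; ring
      nlinarith [mul_neg_of_pos_of_neg hcα hlogneg,
        mul_lt_mul_of_pos_left hsx hcα, h2]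
    refine ⟨key.le, ⟨fun heq => absurd heq key.ne, fun ht => absurd ht h⟩⟩
end

section
/- For every α ∈ (0,∞), β ∈ (0,∞), c̃ ∈ (0,∞), every P ∈ (0,∞)^K and every Q ∈ ℝ^K, one has D_{φ_{α,β,c̃}}(Q,P) ≥ 0, with D_{φ_{α,β,c̃}}(Q,P) = 0 if and only if Q = P; in particular D_{φ_{α,β,c̃}}(Q,P) > 0 whenever Q ≠ P. -/
lemma phi_pos (α β c t : ℝ) (hα : 0 < α) (hβ : 0 < β) (hc : 0 < c) (ht : t ≠ 1) :
    0 < phi α β c t := by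
  unfold phi
  rw [if_neg ht]
  set x : ℝ := β ^ 2 * ((1 - t) / α) ^ 2 with hxdef
  have h1t : (1 : ℝ) - t ≠ 0 := sub_ne_zero.mpr (Ne.symm ht)
  have hd : (1 - t) / α ≠ 0 := div_ne_zero h1t hα.ne'
  have hx : 0 < x := by positivity
  set s : ℝ := Real.sqrt (1 + x) with hsdef
  have hs1 : 1 < s := by
    rw [show (1:ℝ) = Real.sqrt 1 from Real.sqrt_one.symm]
    exact Real.sqrt_lt_sqrt (by norm_num) (by simpa using hx)
  have hssq : s ^ 2 = 1 + x := Real.sq_sqrt (by linarith)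
  have hs1' : s - 1 ≠ 0 := (by linarith : (0:ℝ) < s - 1).ne'
  have hxeq : x = (s - 1) * (s + 1) := by nlinarith [hssq]
  have key : 2 * (s - 1) / x = 2 / (s + 1) := by
    rw [hxeq, mul_comm 2 (s - 1), mul_div_mul_left _ _ hs1']
  rw [key]
  have hinv : (2 : ℝ) / (s + 1) = ((s + 1) / 2)⁻¹ := by
    rw [inv_div]
  have hlog : Real.log ((s + 1) / 2) < (s + 1) / 2 - 1 :=
    Real.log_lt_sub_one_of_pos (by linarith) (by intro h; nlinarith)
  rw [hinv, Real.log_inv]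
  have : 0 < s - 1 + -Real.log ((s + 1) / 2) := by linarith
  exact mul_pos (mul_pos hc hα) this

theorem stmt_16 (K : ℕ) (α β c : ℝ) (hα : 0 < α) (hβ : 0 < β) (hc : 0 < c)
    (Q P : Fin K → ℝ) (hP : ∀ k, 0 < P k) :
    0 ≤ Dphi K (phi α β c) Q P ∧
    (Dphi K (phi α β c) Q P = 0 ↔ Q = P) ∧
    (Q ≠ P → 0 < Dphi K (phi α β c) Q P) := by
  have hzero : ∀ k, Q k = P k → P k * phi α β c (Q k / P k) = 0 := by
    intro k hk
    rw [hk, div_self (hP k).ne']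
    simp [phi]
  have hpos : ∀ k, Q k ≠ P k → 0 < P k * phi α β c (Q k / P k) := by
    intro k hk
    refine mul_pos (hP k) (phi_pos α β c _ hα hβ hc ?_)
    intro h
    exact hk ((div_eq_one_iff_eq (hP k).ne').mp h)
  have hnn : ∀ k ∈ Finset.univ, 0 ≤ P k * phi α β c (Q k / P k) := by
    intro k _
    by_cases hk : Q k = P k
    · exact (hzero k hk).ge
    · exact (hpos k hk).le
  have h1 : 0 ≤ Dphi K (phi α β c) Q P := Finset.sum_nonneg hnn
  have h2 : Dphi K (phi α β c) Q P = 0 ↔ Q = P := by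
    rw [Dphi, Finset.sum_eq_zero_iff_of_nonneg hnn]
    constructor
    · intro h
      funext k
      by_contra hk
      exact (hpos k hk).ne' (h k (Finset.mem_univ k))
    · intro h k _
      exact hzero k (by rw [h])
  exact ⟨h1, h2, fun hne => lt_of_le_of_ne h1 (fun h => hne (h2.mp h.symm))⟩
end
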